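/- If a finite simple graph G is connected and has spectral radius at most 2, and G has equal numbers of vertices and edges, then G is a cycle. -/

import Mathlib

/-!
If every adjacency eigenvalue is at most `d`, then `d • 1 - A` is positive semidefinite. When the
average degree is also `d`, the all-ones vector `𝟙` has `𝟙ᵀ (d • 1 - A) 𝟙 = d |V| - 2 |E| = 0`,
hence `(d • 1 - A) 𝟙 = 0`, i.e. the graph is `d`-regular. For `d = 2` and `G` connected, the cycle
through any vertex of a `2`-regular graph covers its whole component, so `C_n` embeds in `G`, and
an embedding between graphs of the same order that does not raise degrees is an isomorphism.
-/

open Finset Matrix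

namespace Matrix

variable {n : Type*} [Fintype n] [DecidableEq n]

theorem IsHermitian.posSemidef_smul_one_sub_of_eigenvalue_le {A : Matrix n n ℝ}
    (hA : A.IsHermitian) {c : ℝ} (h : ∀ μ : ℝ, (∃ v : n → ℝ, v ≠ 0 ∧ A *ᵥ v = μ • v) → μ ≤ c) :
    (c • 1 - A).PosSemidef := by
  have hM : (c • 1 - A).IsHermitian := (isHermitian_one.smul (IsSelfAdjoint.all c)).sub hA
  refine hM.posSemidef_iff_eigenvalues_nonneg.mpr fun i => ?_
  have hv : ⇑(hM.eigenvectorBasis i) ≠ 0 := fun h0 =>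
    hM.eigenvectorBasis.orthonormal.ne_zero i (by simpa using congrArg (WithLp.toLp 2) h0)
  have hAv := hM.mulVec_eigenvectorBasis i
  rw [sub_mulVec, smul_mulVec, one_mulVec, sub_eq_iff_eq_add, ← sub_eq_iff_eq_add', ← sub_smul]
    at hAv
  have hle := h _ ⟨_, hv, hAv.symm⟩
  simp only [Pi.zero_apply]
  linarith

end Matrix

namespace SimpleGraph

variable {V W : Type*} [Fintype V] [Fintype W]

theorem isRegularOfDegree_of_eigenvalue_le [DecidableEq V] (G : SimpleGraph V)
    [DecidableRel G.Adj] {d : ℕ}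
    (h : ∀ μ : ℝ, (∃ v : V → ℝ, v ≠ 0 ∧ G.adjMatrix ℝ *ᵥ v = μ • v) → μ ≤ d)
    (hcard : 2 * #G.edgeFinset = d * Fintype.card V) :
    G.IsRegularOfDegree d := by
  set M := (d : ℝ) • 1 - G.adjMatrix ℝ
  have hM1 : M *ᵥ (fun _ => 1) = fun v => (d : ℝ) - G.degree v := by
    ext v
    simp [M, sub_mulVec, smul_mulVec]
  have hquad : star (fun _ : V => (1 : ℝ)) ⬝ᵥ M *ᵥ (fun _ => 1) = 0 := by
    rw [hM1]
    simp only [dotProduct, star_trivial, one_mul, sum_sub_distrib, ← Nat.cast_sum,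
      sum_degrees_eq_twice_card_edges, hcard, sum_const, card_univ, nsmul_eq_mul]
    push_cast
    ring
  have hM : M.PosSemidef := (G.isHermitian_adjMatrix ℝ).posSemidef_smul_one_sub_of_eigenvalue_le h
  have hzero : M *ᵥ (fun _ => 1) = 0 := (hM.dotProduct_mulVec_zero_iff _).mp hquad
  intro v
  have hv := congrFun (hM1.symm.trans hzero) v
  simp only [Pi.zero_apply, sub_eq_zero] at hv
  exact_mod_cast hv.symm

theorem Copy.adj_of_degree_le {H : SimpleGraph W} {G : SimpleGraph V} [DecidableRel H.Adj]
    [DecidableRel G.Adj] (f : Copy H G) {a b : W} (hdeg : G.degree (f a) ≤ H.degree a)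
    (hab : G.Adj (f a) (f b)) : H.Adj a b := by
  have hsub : (H.neighborFinset a).map f.toEmbedding ⊆ G.neighborFinset (f a) := by
    intro x hx
    obtain ⟨y, hy, rfl⟩ := mem_map.mp hx
    simpa [Copy.toEmbedding] using f.toHom.map_adj ((mem_neighborFinset _ _ _).mp hy)
  have heq := eq_of_subset_of_card_le hsub (by simpa using hdeg)
  have hb : f b ∈ (H.neighborFinset a).map f.toEmbedding :=
    heq ▸ (mem_neighborFinset _ _ _).mpr hab
  simpa [Copy.toEmbedding] using hb

theorem Copy.nonempty_iso_of_card_eq {H : SimpleGraph W} {G : SimpleGraph V}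
    [DecidableRel H.Adj] [DecidableRel G.Adj] (f : Copy H G)
    (hcard : Fintype.card W = Fintype.card V) (hdeg : ∀ a, G.degree (f a) ≤ H.degree a) :
    Nonempty (H ≃g G) :=
  ⟨⟨Equiv.ofBijective f (Fintype.bijective_iff_injective_and_card f |>.mpr ⟨f.injective, hcard⟩),
    fun {_ _} => ⟨f.adj_of_degree_le (hdeg _), f.toHom.map_adj⟩⟩⟩

theorem cycleGraph_isRegularOfDegree_two {n : ℕ} (hn : 3 ≤ n) :
    (cycleGraph n).IsRegularOfDegree 2 := by
  obtain ⟨m, rfl⟩ := Nat.exists_eq_add_of_le' hn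
  exact fun _ => cycleGraph_degree_three_le

variable {G : SimpleGraph V} [DecidableRel G.Adj]

theorem IsRegularOfDegree.isCycles (hG : G.IsRegularOfDegree 2) : G.IsCycles := by
  intro v _
  rw [Set.ncard_eq_toFinset_card', ← neighborFinset_def, card_neighborFinset_eq_degree, hG]

theorem Connected.exists_isHamiltonianCycle_of_isRegularOfDegree_two [DecidableEq V]
    (hconn : G.Connected) (hG : G.IsRegularOfDegree 2) :
    ∃ (v : V) (p : G.Walk v v), p.IsHamiltonianCycle := by
  obtain ⟨v⟩ := hconn.nonempty
  have hv : (G.neighborSet v).Nonempty := G.degree_pos_iff_nonempty.mp (by rw [hG]; norm_num)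
  obtain ⟨p, hp, hverts⟩ := hG.isCycles.exists_cycle_toSubgraph_verts_eq_connectedComponentSupp
    (c := G.connectedComponentMk v) rfl hv
  refine ⟨v, p, Walk.isHamiltonianCycle_isCycle_and_isHamiltonian_tail.mpr
    ⟨hp, hp.isPath_tail.isHamiltonian_of_mem fun w => ?_⟩⟩
  have hw : w ∈ p.support := by
    rw [← Walk.mem_verts_toSubgraph, hverts, ConnectedComponent.mem_supp_iff,
      ConnectedComponent.eq]
    exact hconn w v
  rw [p.support_tail_of_not_nil hp.not_nil]
  rcases p.mem_support_iff.mp hw with rfl | hw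
  · exact Walk.end_mem_tail_support hp.not_nil
  · exact hw

theorem Connected.nonempty_iso_cycleGraph_of_isRegularOfDegree_two (hconn : G.Connected)
    (hG : G.IsRegularOfDegree 2) : Nonempty (G ≃g cycleGraph (Fintype.card V)) := by
  classical
  obtain ⟨v, p, hp⟩ := hconn.exists_isHamiltonianCycle_of_isRegularOfDegree_two hG
  have h3 : 3 ≤ Fintype.card V := hp.length_eq ▸ hp.isCycle.three_le_length
  obtain ⟨f⟩ := (cycleGraph_isContained_iff h3).mpr ⟨v, p, hp.isCycle, hp.length_eq⟩
  obtain ⟨e⟩ := f.nonempty_iso_of_card_eq (Fintype.card_fin _) fun a => by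
    rw [hG, cycleGraph_isRegularOfDegree_two h3]
  exact ⟨e.symm⟩

end SimpleGraph

/-- A connected finite simple graph with spectral radius at most `2` and with
equally many vertices and edges is a cycle. -/
theorem connected_specRad_le_two_eq_cycle {n : ℕ} (G : SimpleGraph (Fin n))
    [DecidableRel G.Adj] (hconn : G.Connected)
    (hspec : ∀ μ : ℝ, (∃ v : Fin n → ℝ, v ≠ 0 ∧ (G.adjMatrix ℝ).mulVec v = μ • v) →
      |μ| ≤ 2)
    (hcount : G.edgeFinset.card = n) :
    Nonempty (G ≃g SimpleGraph.cycleGraph n) := by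
  have hreg : G.IsRegularOfDegree 2 :=
    G.isRegularOfDegree_of_eigenvalue_le
      (fun μ hμ => (le_abs_self μ).trans (by exact_mod_cast hspec μ hμ))
      (by rw [hcount, Fintype.card_fin])
  obtain ⟨e⟩ := hconn.nonempty_iso_cycleGraph_of_isRegularOfDegree_two hreg
  rw [Fintype.card_fin] at e
  exact ⟨e⟩
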